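/- Let q be a real number with q ≥ 3, let t ≥ t₃(q), and let z satisfy z_c^−(t,q) < z < z_c^+(t,q). Then the second iterate R²_{z,t,q} has exactly three real fixed points, each lying in (0,∞). One of them, w₃, is a repelling fixed point of the first iterate R_{z,t,q} (R_{z,t,q}(w₃) = w₃ and |R'_{z,t,q}(w₃)| > 1). The other two, w₁ and w₂, form an attracting period-2 cycle of R_{z,t,q}: R_{z,t,q}(w₁) = w₂, R_{z,t,q}(w₂) = w₁, and |(R²_{z,t,q})'(w₁)| < 1. -/

import Mathlib

noncomputable section

/-- The renormalization map `R_{z,t,q}(w) = z·((t + w + (q−2)tw)/(1 + (q−1)tw))²`,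
viewed as a function of the real variable `w`. -/
def Rmap (z t q : ℝ) (w : ℝ) : ℝ :=
  z * ((t + w + (q - 2) * t * w) / (1 + (q - 1) * t * w)) ^ 2

/-- The second iterate `R²_{z,t,q}(w) = R_{z,t,q}(R_{z,t,q}(w))`. -/
def Rmap2 (z t q : ℝ) (w : ℝ) : ℝ := Rmap z t q (Rmap z t q w)

/-- `t₃(q) = 3(3q − 6 + √(9q² − 32q + 32))/(2(q − 1))`. -/
def tThree (q : ℝ) : ℝ :=
  3 * (3 * q - 6 + Real.sqrt (9 * q ^ 2 - 32 * q + 32)) / (2 * (q - 1))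

/-- `z_c^+(t,q)`. -/
def zcPlus (q t : ℝ) : ℝ :=
  ((-3 - 6 * (q - 2) * t - 3 * (2 + (q - 2) * q) * t ^ 2 - 6 * (q - 2) * (q - 1) * t ^ 3
      + (q - 1) ^ 2 * t ^ 4)
    + Real.sqrt ((t - 1) ^ 3 * (1 - t + q * t) ^ 3 * (-9 + 18 * t - 9 * q * t - t ^ 2 + q * t ^ 2)))
    / (8 * t * (1 - 2 * t + q * t) ^ 3)

/-- `z_c^−(t,q)`. -/
def zcMinus (q t : ℝ) : ℝ :=
  ((-3 - 6 * (q - 2) * t - 3 * (2 + (q - 2) * q) * t ^ 2 - 6 * (q - 2) * (q - 1) * t ^ 3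
      + (q - 1) ^ 2 * t ^ 4)
    - Real.sqrt ((t - 1) ^ 3 * (1 - t + q * t) ^ 3 * (-9 + 18 * t - 9 * q * t - t ^ 2 + q * t ^ 2)))
    / (8 * t * (1 - 2 * t + q * t) ^ 3)

/-!
With `B = (q-1)t` and `M = 1 + (q-2)t` the map is `R(w) = z((t + Mw)/(1 + Bw))²`. The condition
`t ≥ t₃(q)` says `Bt ≥ 9M`; in particular `Bt > M`, so `R` is strictly decreasing on `[0, ∞)`
and has a unique fixed point `w₃ > 0`. Clearing denominators, `R(R(w)) = w` factors into the
fixed-point equation of `R` times the quadratic `(Pw + Q)² - z(Bt - M)²w`, where `P = B + zM²`,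
`Q = 1 + ztM`, and `z_c^- < z < z_c^+` is exactly the condition `4PQ < z(Bt - M)²` for this
quadratic to have two positive roots `w₁ < w₂`. A decreasing map must swap them, so
`w₁ < w₃ < w₂`. By Vieta the multiplier `R'(w₁)R'(w₂)` of the cycle is `4PQ/(z(Bt - M)²) < 1`,
while at a fixed point where the quadratic is negative `|R'| > 1`.
-/

open Set Function

theorem StrictAntiOn.eq_of_isFixedPt {α : Type*} [LinearOrder α] {f : α → α} {s : Set α}
    (hf : StrictAntiOn f s) {a b : α} (ha : a ∈ s) (hb : b ∈ s) (hfa : IsFixedPt f a)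
    (hfb : IsFixedPt f b) : a = b := by
  by_contra hne
  rcases lt_or_gt_of_ne hne with h | h
  · exact (hf ha hb h).not_gt (by rwa [hfa.eq, hfb.eq])
  · exact (hf hb ha h).not_gt (by rwa [hfa.eq, hfb.eq])

theorem AntitoneOn.lt_of_isFixedPt_of_lt_apply {α : Type*} [LinearOrder α] {f : α → α}
    {s : Set α} (hf : AntitoneOn f s) {p r : α} (hp : p ∈ s) (hr : r ∈ s) (hfp : IsFixedPt f p)
    (hrf : r < f r) : r < p := by
  by_contra! h
  exact (hrf.trans_le ((hf hp hr h).trans_eq hfp.eq)).not_ge h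

theorem AntitoneOn.lt_of_isFixedPt_of_apply_lt {α : Type*} [LinearOrder α] {f : α → α}
    {s : Set α} (hf : AntitoneOn f s) {p r : α} (hp : p ∈ s) (hr : r ∈ s) (hfp : IsFixedPt f p)
    (hrf : f r < r) : p < r := by
  by_contra! h
  exact (hrf.trans_le' ((hfp.eq.symm.trans_le (hf hr hp h)))).not_ge h

theorem apply_eq_and_apply_eq_of_comp_self_eq_iff {α : Type*} {f : α → α} {a b p : α}
    (hab : a ≠ b) (hfp : IsFixedPt f p) (hp : ∀ x, IsFixedPt f x → x = p)
    (hcl : ∀ x, f (f x) = x ↔ x = a ∨ x = b ∨ x = p) : f a = b ∧ f b = a ∧ a ≠ p ∧ b ≠ p := by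
  have hper : ∀ x, f (f x) = x → f (f (f x)) = f x := fun x hx => by rw [hx]
  have hmoves : ∀ x, f (f x) = x → x ≠ p → f x ≠ x ∧ f x ≠ p := fun x hx hxp =>
    ⟨fun h => hxp (hp x h), fun h => hxp (by rw [← hx, h, hfp.eq])⟩
  have ha := (hcl a).2 (Or.inl rfl)
  have hb := (hcl b).2 (Or.inr (Or.inl rfl))
  have hap : a ≠ p := by
    rintro rfl
    obtain ⟨h₁, h₂⟩ := hmoves b hb hab.symm
    rcases (hcl (f b)).1 (hper b hb) with h | h | h <;> contradiction
  have hbp : b ≠ p := by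
    rintro rfl
    obtain ⟨h₁, h₂⟩ := hmoves a ha hab
    rcases (hcl (f a)).1 (hper a ha) with h | h | h <;> contradiction
  obtain ⟨h₁, h₂⟩ := hmoves a ha hap
  have hfa : f a = b := by
    rcases (hcl (f a)).1 (hper a ha) with h | h | h <;> first | exact h | contradiction
  exact ⟨hfa, hfa ▸ ha, hap, hbp⟩

theorem exists_factorization_of_four_mul_lt {P Q S : ℝ} (hP : 0 < P) (hQ : 0 < Q)
    (hS : 4 * P * Q < S) :
    ∃ w₁ w₂, 0 < w₁ ∧ w₁ < w₂ ∧ ∀ u, (P * u + Q) ^ 2 - S * u = P ^ 2 * (u - w₁) * (u - w₂) := by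
  have hS₀ : 0 < S := by nlinarith [mul_pos hP hQ]
  set δ := √(S * (S - 4 * P * Q))
  have hδsq : δ ^ 2 = S * (S - 4 * P * Q) := Real.sq_sqrt (by nlinarith)
  have hδ : 0 < δ := Real.sqrt_pos.2 (by nlinarith)
  have hδlt : δ < S - 2 * P * Q :=
    lt_of_pow_lt_pow_left₀ 2 (by nlinarith [mul_pos hP hQ]) (by nlinarith [mul_pos hP hQ])
  refine ⟨(S - 2 * P * Q - δ) / (2 * P ^ 2), (S - 2 * P * Q + δ) / (2 * P ^ 2),
    by apply div_pos <;> nlinarith, by gcongr; linarith, fun u => ?_⟩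
  field_simp
  linear_combination hδsq

def sqMobius (z t M B w : ℝ) : ℝ := z * ((t + M * w) / (1 + B * w)) ^ 2

namespace sqMobius

variable {z t M B w : ℝ}

theorem hasDerivAt (hw : 1 + B * w ≠ 0) :
    HasDerivAt (sqMobius z t M B) (2 * z * (M - B * t) * (t + M * w) / (1 + B * w) ^ 3) w := by
  have h := ((((hasDerivAt_id w).const_mul M).const_add t).div
    (((hasDerivAt_id w).const_mul B).const_add 1) hw).pow 2 |>.const_mul z
  refine h.congr_deriv ?_
  simp only [Pi.div_apply, id, Nat.cast_ofNat, Nat.reduceSub, pow_one]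
  field_simp
  ring

theorem nonneg (hz : 0 ≤ z) (w : ℝ) : 0 ≤ sqMobius z t M B w := by
  unfold sqMobius; positivity

theorem apply_eq_iff {y : ℝ} (hw : 1 + B * w ≠ 0) :
    sqMobius z t M B w = y ↔ z * (t + M * w) ^ 2 = y * (1 + B * w) ^ 2 := by
  rw [sqMobius, div_pow, mul_div_assoc', div_eq_iff (pow_ne_zero 2 hw)]

theorem strictAntiOn (hz : 0 < z) (ht : 0 ≤ t) (hM : 0 ≤ M) (hB : 0 ≤ B) (hc : M < B * t) :
    StrictAntiOn (sqMobius z t M B) (Ici 0) := by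
  intro u hu v hv huv
  rw [mem_Ici] at hu hv
  have hmob : (t + M * v) / (1 + B * v) < (t + M * u) / (1 + B * u) := by
    rw [div_lt_div_iff₀ (by positivity) (by positivity)]
    nlinarith [mul_pos (sub_pos.2 huv) (sub_pos.2 hc)]
  exact mul_lt_mul_of_pos_left (pow_lt_pow_left₀ hmob (by positivity) two_ne_zero) hz

theorem exists_unique_isFixedPt (hz : 0 < z) (ht : 0 < t) (hM : 0 ≤ M) (hB : 0 ≤ B)
    (hc : M < B * t) :
    ∃ p, 0 < p ∧ IsFixedPt (sqMobius z t M B) p ∧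
      ∀ x, IsFixedPt (sqMobius z t M B) x → x = p := by
  have hanti := strictAntiOn hz ht.le hM hB hc
  have hF₀ : sqMobius z t M B 0 = z * t ^ 2 := by simp [sqMobius]
  have hzt : 0 < z * t ^ 2 := by positivity
  have hcont : ContinuousOn (fun w => sqMobius z t M B w - w) (Icc 0 (z * t ^ 2)) := by
    refine ContinuousOn.sub (continuousOn_const.mul ((ContinuousOn.div (by fun_prop)
      (by fun_prop) fun w hw => ?_).pow 2)) continuousOn_id
    have : 0 ≤ w := hw.1
    positivity
  have hdec : sqMobius z t M B (z * t ^ 2) < z * t ^ 2 := by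
    simpa [hF₀] using hanti (mem_Ici.2 le_rfl) (mem_Ici.2 hzt.le) hzt
  obtain ⟨p, ⟨hp₀, -⟩, hp⟩ := intermediate_value_Icc' hzt.le hcont
    (show (0 : ℝ) ∈ Icc _ _ from ⟨by linarith, by rw [hF₀]; linarith⟩)
  have hfix : IsFixedPt (sqMobius z t M B) p := sub_eq_zero.1 hp
  have hp₀' : p ≠ 0 := by
    rintro rfl
    exact hzt.ne' (hF₀.symm.trans hfix)
  refine ⟨p, lt_of_le_of_ne hp₀ hp₀'.symm, hfix, fun x hx => ?_⟩
  exact hanti.eq_of_isFixedPt (mem_Ici.2 (hx ▸ nonneg hz.le x)) (mem_Ici.2 hp₀) hx hfix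

def cycleQuadratic (z t M B u : ℝ) : ℝ :=
  ((B + z * M ^ 2) * u + (1 + z * t * M)) ^ 2 - z * (B * t - M) ^ 2 * u

theorem comp_self_eq_iff (hz : 0 ≤ z) (hB : 0 ≤ B) (hw : 0 ≤ w) :
    sqMobius z t M B (sqMobius z t M B w) = w ↔
      IsFixedPt (sqMobius z t M B) w ∨ cycleQuadratic z t M B w = 0 := by
  have hD : 0 < 1 + B * w := by positivity
  have hFD : 0 < 1 + B * sqMobius z t M B w := by
    have := nonneg (t := t) (M := M) (B := B) hz w
    positivity
  have key : (z * (t + M * sqMobius z t M B w) ^ 2 - w * (1 + B * sqMobius z t M B w) ^ 2)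
      * (1 + B * w) ^ 4 =
        (z * (t + M * w) ^ 2 - w * (1 + B * w) ^ 2) * cycleQuadratic z t M B w := by
    simp only [sqMobius, cycleQuadratic]
    field_simp
    ring
  unfold IsFixedPt
  rw [apply_eq_iff hFD.ne', apply_eq_iff hD.ne', ← sub_eq_zero, ← sub_eq_zero (a := z * _),
    ← mul_eq_zero, ← key, mul_eq_zero, or_iff_left (by positivity)]

theorem comp_self_eq_iff_of_factorization {w₁ w₂ : ℝ}
    (hfac : ∀ u, cycleQuadratic z t M B u = (B + z * M ^ 2) ^ 2 * (u - w₁) * (u - w₂))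
    (hz : 0 < z) (hB : 0 < B) (hw₁ : 0 ≤ w₁) (hw₂ : 0 ≤ w₂) {p : ℝ}
    (hp : IsFixedPt (sqMobius z t M B) p)
    (huniq : ∀ x, IsFixedPt (sqMobius z t M B) x → x = p) (x : ℝ) :
    sqMobius z t M B (sqMobius z t M B x) = x ↔ x = w₁ ∨ x = w₂ ∨ x = p := by
  have hroots : ∀ u, cycleQuadratic z t M B u = 0 ↔ u = w₁ ∨ u = w₂ := fun u => by
    have hP : B + z * M ^ 2 ≠ 0 := by positivity
    simp [hfac, hP, sub_eq_zero]
  constructor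
  · intro hx
    rcases (comp_self_eq_iff hz.le hB.le (hx ▸ nonneg hz.le _)).1 hx with h | h
    · exact Or.inr (Or.inr (huniq x h))
    · exact ((hroots x).1 h).elim Or.inl (Or.inr ∘ Or.inl)
  · rintro (rfl | rfl | rfl)
    · exact (comp_self_eq_iff hz.le hB.le hw₁).2 (Or.inr ((hroots _).2 (Or.inl rfl)))
    · exact (comp_self_eq_iff hz.le hB.le hw₂).2 (Or.inr ((hroots _).2 (Or.inr rfl)))
    · rw [hp.eq, hp.eq]

theorem one_lt_abs_deriv_of_isFixedPt (ht : 0 < t) (hM : 0 ≤ M) (hB : 0 ≤ B)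
    (hc : M < B * t) (hw : 0 < w) (hfix : IsFixedPt (sqMobius z t M B) w)
    (hq : cycleQuadratic z t M B w < 0) : 1 < |deriv (sqMobius z t M B) w| := by
  have hD : 0 < 1 + B * w := by positivity
  have hN : 0 < t + M * w := by positivity
  have hcw : 0 < (B * t - M) * w := mul_pos (sub_pos.2 hc) hw
  have hfix' : z * (t + M * w) ^ 2 = w * (1 + B * w) ^ 2 := (apply_eq_iff hD.ne').1 hfix
  -- At a fixed point `(t + Mw) · ((B + zM²)w + 1 + ztM) = (1 + Bw)(t + Mw + Mw(1 + Bw))`.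
  have hsq : ((1 + B * w) * (t + M * w + M * w * (1 + B * w))) ^ 2 <
      ((1 + B * w) * ((B * t - M) * w)) ^ 2 := by
    have h := mul_neg_of_pos_of_neg (pow_pos hN 2) hq
    unfold cycleQuadratic at h
    linear_combination h + ((B * t - M) ^ 2 * w - M * (2 * (t + M * w) * (1 + B * w)
      + M * z * (t + M * w) ^ 2 + M * w * (1 + B * w) ^ 2)) * hfix'
  have hlin : t + M * w + M * w * (1 + B * w) < (B * t - M) * w :=
    lt_of_mul_lt_mul_left (lt_of_pow_lt_pow_left₀ 2 (by positivity) hsq) hD.le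
  have hderiv : deriv (sqMobius z t M B) w =
      -(2 * (B * t - M) * w / ((t + M * w) * (1 + B * w))) := by
    rw [(hasDerivAt hD.ne').deriv]
    field_simp
    linear_combination (-(B * t - M)) * hfix'
  rw [hderiv, abs_neg, abs_of_pos (by positivity), one_lt_div (by positivity)]
  linear_combination hlin

theorem deriv_mul_deriv_of_factorization {w₁ w₂ : ℝ}
    (hfac : ∀ u, cycleQuadratic z t M B u = (B + z * M ^ 2) ^ 2 * (u - w₁) * (u - w₂))
    (hz : 0 < z) (hB : 0 < B) (hc : M ≠ B * t) (hw₁ : 0 ≤ w₁) (hw₂ : 0 ≤ w₂) :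
    deriv (sqMobius z t M B) w₁ * deriv (sqMobius z t M B) w₂ =
      4 * (B + z * M ^ 2) * (1 + z * t * M) / (z * (B * t - M) ^ 2) := by
  have hP : 0 < B + z * M ^ 2 := by positivity
  have hD₁ : 0 < 1 + B * w₁ := by positivity
  have hD₂ : 0 < 1 + B * w₂ := by positivity
  have h₀ := hfac 0
  have h₁ := hfac 1
  -- Vieta's formulas, read off the factorization at `u = 0` and `u = 1`.
  unfold cycleQuadratic at h₀ h₁
  have hN : (t + M * w₁) * (t + M * w₂) =
      (B * t - M) ^ 2 * (1 + z * t * M) / (B + z * M ^ 2) ^ 2 := by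
    rw [eq_div_iff (by positivity)]
    linear_combination (t * M) * h₁ - (M ^ 2 + t * M) * h₀
  have hD : (1 + B * w₁) * (1 + B * w₂) = z * (B * t - M) ^ 2 / (B + z * M ^ 2) := by
    rw [eq_div_iff hP.ne']
    refine mul_right_cancel₀ hP.ne' ?_
    linear_combination B * h₁ - (B ^ 2 + B) * h₀
  rw [(hasDerivAt hD₁.ne').deriv, (hasDerivAt hD₂.ne').deriv]
  calc _ = 4 * z ^ 2 * (B * t - M) ^ 2 * ((t + M * w₁) * (t + M * w₂)) /
        ((1 + B * w₁) * (1 + B * w₂)) ^ 3 := by field_simp; ring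
    _ = _ := by
      have : B * t - M ≠ 0 := sub_ne_zero.2 hc.symm
      rw [hN, hD]
      field_simp

theorem abs_deriv_comp_self_lt_one {w₁ w₂ : ℝ}
    (hfac : ∀ u, cycleQuadratic z t M B u = (B + z * M ^ 2) ^ 2 * (u - w₁) * (u - w₂))
    (hz : 0 < z) (ht : 0 ≤ t) (hM : 0 ≤ M) (hB : 0 < B) (hc : M ≠ B * t) (hw₁ : 0 ≤ w₁)
    (hw₂ : 0 ≤ w₂) (h₁₂ : sqMobius z t M B w₁ = w₂)
    (hdisc : 4 * (B + z * M ^ 2) * (1 + z * t * M) < z * (B * t - M) ^ 2) :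
    |deriv (sqMobius z t M B ∘ sqMobius z t M B) w₁| < 1 := by
  have hD₁ : 0 < 1 + B * w₁ := by positivity
  have hD₂ : 0 < 1 + B * w₂ := by positivity
  have hd₁ := hasDerivAt (z := z) (t := t) (M := M) hD₁.ne'
  have hd₂ : HasDerivAt (sqMobius z t M B) (deriv (sqMobius z t M B) w₂)
      (sqMobius z t M B w₁) := by
    rw [h₁₂]
    exact (hasDerivAt hD₂.ne').differentiableAt.hasDerivAt
  rw [(hd₂.comp w₁ hd₁).deriv, ← hd₁.deriv, mul_comm,
    deriv_mul_deriv_of_factorization hfac hz hB hc hw₁ hw₂,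
    abs_of_nonneg (by positivity), div_lt_one (by positivity)]
  exact hdisc

end sqMobius

section Parameters

variable {q t M B : ℝ}

theorem Rmap_eq_sqMobius (hM : M = 1 + (q - 2) * t) (hB : B = (q - 1) * t) (z : ℝ) :
    Rmap z t q = sqMobius z t M B := by
  subst hM hB
  funext w
  simp only [Rmap, sqMobius]
  ring_nf

/-- `t₃(q)` is the larger root of `(q - 1)t² = 9(1 + (q - 2)t)`, i.e. of `Bt = 9M`. -/
theorem pos_and_nine_mul_le_of_tThree_le (hM : M = 1 + (q - 2) * t) (hB : B = (q - 1) * t)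
    (hq : 2 ≤ q) (ht : tThree q ≤ t) : 0 < t ∧ 0 < M ∧ 0 < B ∧ 9 * M ≤ B * t := by
  subst hM hB
  set σ := √(9 * q ^ 2 - 32 * q + 32)
  have hσsq : σ ^ 2 = 9 * q ^ 2 - 32 * q + 32 := Real.sq_sqrt (by nlinarith)
  have hσ : 0 < σ := Real.sqrt_pos.2 (by nlinarith)
  have h : 9 * (q - 2) + 3 * σ ≤ 2 * (q - 1) * t := by
    rw [tThree, div_le_iff₀ (by linarith)] at ht
    linarith
  have ht₀ : 0 < t := by nlinarith
  refine ⟨ht₀, by nlinarith, by nlinarith, ?_⟩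
  have hsq := mul_self_le_mul_self (by positivity) (le_sub_iff_add_le'.2 h)
  nlinarith

theorem zc_radicand_eq (hM : M = 1 + (q - 2) * t) (hB : B = (q - 1) * t) :
    (t - 1) ^ 3 * (1 - t + q * t) ^ 3 * (-9 + 18 * t - 9 * q * t - t ^ 2 + q * t ^ 2) =
      (B * t - M) ^ 3 * (B * t - 9 * M) := by
  subst hM hB
  ring

theorem zcMinus_eq (hM : M = 1 + (q - 2) * t) (hB : B = (q - 1) * t) :
    zcMinus q t = ((B * t - M) ^ 2 - 4 * M ^ 2 - 4 * B * t * M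
      - √((B * t - M) ^ 3 * (B * t - 9 * M))) / (8 * t * M ^ 3) := by
  rw [zcMinus, zc_radicand_eq hM hB, hM, hB]
  ring

theorem zcPlus_eq (hM : M = 1 + (q - 2) * t) (hB : B = (q - 1) * t) :
    zcPlus q t = ((B * t - M) ^ 2 - 4 * M ^ 2 - 4 * B * t * M
      + √((B * t - M) ^ 3 * (B * t - 9 * M))) / (8 * t * M ^ 3) := by
  rw [zcPlus, zc_radicand_eq hM hB, hM, hB]
  ring

end Parameters

/-- `z_c^±` are the two roots in `z` of the discriminant `z(Bt - M)² - 4(B + zM²)(1 + ztM)`. -/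
theorem pos_and_four_mul_lt_of_mem_Ioo {t M B z : ℝ} (ht : 0 < t) (hM : 0 < M)
    (hBM : 9 * M ≤ B * t)
    (hz : z ∈ Ioo (((B * t - M) ^ 2 - 4 * M ^ 2 - 4 * B * t * M
      - √((B * t - M) ^ 3 * (B * t - 9 * M))) / (8 * t * M ^ 3))
      (((B * t - M) ^ 2 - 4 * M ^ 2 - 4 * B * t * M
      + √((B * t - M) ^ 3 * (B * t - 9 * M))) / (8 * t * M ^ 3))) :
    0 < z ∧ 4 * (B + z * M ^ 2) * (1 + z * t * M) < z * (B * t - M) ^ 2 := by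
  set K := (B * t - M) ^ 2 - 4 * M ^ 2 - 4 * B * t * M
  set s := √((B * t - M) ^ 3 * (B * t - 9 * M))
  have hs : s ^ 2 = (B * t - M) ^ 3 * (B * t - 9 * M) :=
    Real.sq_sqrt (mul_nonneg (pow_nonneg (by linarith) 3) (by linarith))
  have hd : 0 < 8 * t * M ^ 3 := by positivity
  obtain ⟨hz₁, hz₂⟩ := hz
  rw [div_lt_iff₀ hd] at hz₁
  rw [lt_div_iff₀ hd] at hz₂
  have hK : 0 < K := by nlinarith
  have hsK : s < K := by
    refine lt_of_pow_lt_pow_left₀ 2 hK.le ?_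
    have : K ^ 2 - s ^ 2 = 64 * (B * t) * M ^ 3 := by rw [hs]; ring
    nlinarith [pow_pos hM 3]
  refine ⟨pos_of_mul_pos_left (by linarith) hd.le, ?_⟩
  have hkey : 16 * t * M ^ 3 * (z * (B * t - M) ^ 2 - 4 * (B + z * M ^ 2) * (1 + z * t * M)) =
      s ^ 2 - (z * (8 * t * M ^ 3) - K) ^ 2 := by
    rw [hs]; ring
  have hsq : (z * (8 * t * M ^ 3) - K) ^ 2 < s ^ 2 := sq_lt_sq' (by linarith) (by linarith)
  linarith [pos_of_mul_pos_right (hkey ▸ sub_pos.2 hsq) (by positivity)]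

/-- **Lemma (region 𝓡₂: attracting two-cycle).**
Let `q ≥ 3` be real, `t ≥ t₃(q)`, and `z_c^−(t,q) < z < z_c^+(t,q)`.  Then the second
iterate `R²_{z,t,q}` has exactly three real fixed points, all in `(0,∞)`: one, `w₃`,
is a repelling fixed point of `R_{z,t,q}`, and the other two, `w₁` and `w₂`, form an
attracting period-2 cycle of `R_{z,t,q}`. -/
theorem region_two_attracting_two_cycle
    (q : ℝ) (hq : 3 ≤ q) (t : ℝ) (ht : tThree q ≤ t) (z : ℝ)
    (hz1 : zcMinus q t < z) (hz2 : z < zcPlus q t) :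
    ∃ w₁ w₂ w₃ : ℝ, 0 < w₁ ∧ 0 < w₂ ∧ 0 < w₃ ∧
      w₁ ≠ w₂ ∧ w₁ ≠ w₃ ∧ w₂ ≠ w₃ ∧
      Rmap2 z t q w₁ = w₁ ∧ Rmap2 z t q w₂ = w₂ ∧ Rmap2 z t q w₃ = w₃ ∧
      (∀ w : ℝ, Rmap2 z t q w = w → w = w₁ ∨ w = w₂ ∨ w = w₃) ∧
      Rmap z t q w₃ = w₃ ∧ 1 < |deriv (Rmap z t q) w₃| ∧
      Rmap z t q w₁ = w₂ ∧ Rmap z t q w₂ = w₁ ∧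
      |deriv (Rmap2 z t q) w₁| < 1 := by
  obtain ⟨M, hM⟩ : ∃ M, M = 1 + (q - 2) * t := ⟨_, rfl⟩
  obtain ⟨B, hB⟩ : ∃ B, B = (q - 1) * t := ⟨_, rfl⟩
  obtain ⟨ht₀, hM₀, hB₀, hBM⟩ := pos_and_nine_mul_le_of_tThree_le hM hB (by linarith) ht
  have hc : M < B * t := by linarith
  rw [zcMinus_eq hM hB] at hz1
  rw [zcPlus_eq hM hB] at hz2
  obtain ⟨hz, hdisc⟩ := pos_and_four_mul_lt_of_mem_Ioo ht₀ hM₀ hBM ⟨hz1, hz2⟩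
  obtain ⟨w₁, w₂, hw₁, hw₁₂, hfac⟩ :=
    exists_factorization_of_four_mul_lt (by positivity) (by positivity) hdisc
  have hw₂ : 0 < w₂ := hw₁.trans hw₁₂
  obtain ⟨w₃, hw₃, hfix, huniq⟩ := sqMobius.exists_unique_isFixedPt hz ht₀ hM₀.le hB₀.le hc
  have hcl := sqMobius.comp_self_eq_iff_of_factorization hfac hz hB₀ hw₁.le hw₂.le hfix huniq
  obtain ⟨h₁₂, h₂₁, h₁₃, h₂₃⟩ :=
    apply_eq_and_apply_eq_of_comp_self_eq_iff hw₁₂.ne hfix huniq hcl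
  have hanti := (sqMobius.strictAntiOn hz ht₀.le hM₀.le hB₀.le hc).antitoneOn
  have hw₁₃ : w₁ < w₃ := hanti.lt_of_isFixedPt_of_lt_apply hw₃.le hw₁.le hfix (h₁₂ ▸ hw₁₂)
  have hw₃₂ : w₃ < w₂ := hanti.lt_of_isFixedPt_of_apply_lt hw₃.le hw₂.le hfix (h₂₁ ▸ hw₁₂)
  have hR := Rmap_eq_sqMobius hM hB z
  have hR2 : Rmap2 z t q = sqMobius z t M B ∘ sqMobius z t M B := by rw [← hR]; rfl
  rw [hR2, hR]
  refine ⟨w₁, w₂, w₃, hw₁, hw₂, hw₃, hw₁₂.ne, h₁₃, h₂₃, (hcl w₁).2 (Or.inl rfl),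
    (hcl w₂).2 (Or.inr (Or.inl rfl)), (hcl w₃).2 (Or.inr (Or.inr rfl)), fun w => (hcl w).1,
    hfix, ?_, h₁₂, h₂₁, sqMobius.abs_deriv_comp_self_lt_one hfac hz ht₀.le hM₀.le hB₀ hc.ne
      hw₁.le hw₂.le h₁₂ hdisc⟩
  refine sqMobius.one_lt_abs_deriv_of_isFixedPt ht₀ hM₀.le hB₀.le hc hw₃ hfix ?_
  exact (hfac w₃).trans_lt (mul_neg_of_pos_of_neg (mul_pos (by positivity) (sub_pos.2 hw₁₃))
    (sub_neg.2 hw₃₂))
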